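/- Let K, K′ ⊆ ℝ^n be locally anti-blocking convex bodies and let 0 ≤ j ≤ n. For σ ∈ {−1,1}^n write K_σ = K ∩ σℝ_+^n and K′_σ = K′ ∩ σℝ_+^n. Then V_n(K[j], K′[n−j]) = Σ_{σ ∈ {−1,1}^n} V_n(K_σ[j], K′_σ[n−j]). -/

import Mathlib

/-!
In a closed orthant `σℝ₊ⁿ`, a convex locally anti-blocking body `K` is down-closed: with `x` it
contains the whole box between `0` and `x`, because that box is the convex hull of the coordinate
projections of `x`, which lie in `K` by the anti-blocking property. For down-closed sets Minkowski
addition commutes with intersecting with an orthant: coordinate by coordinate, a sum `y + z` lying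
in the orthant is also a sum `a + b` with `a`, `b` moved from `y`, `z` towards `0` and into the
orthant. Since the orthants cover `ℝⁿ` and overlap in null sets, this gives
`Vol(l • K + K') = ∑_σ Vol(l • K_σ + K'_σ)` for all `l > 0`, and comparing the coefficients of
these polynomials in `l` gives the identity of mixed volumes.
-/

open MeasureTheory
open scoped Pointwise

noncomputable section

/-- The nonnegative orthant `ℝ₊ⁿ`. -/
def nonnegOrthant (n : ℕ) : Set (EuclideanSpace ℝ (Fin n)) := {x | ∀ i, 0 ≤ x i}

/-- The sign `±1` associated to a boolean. -/
def sgn (b : Bool) : ℝ := if b then 1 else -1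

/-- The closed orthant `σ ℝ₊ⁿ` corresponding to a sign vector `σ ∈ {-1,1}ⁿ`. -/
def signedOrthant {n : ℕ} (σ : Fin n → Bool) : Set (EuclideanSpace ℝ (Fin n)) :=
  {x | ∀ i, 0 ≤ sgn (σ i) * x i}

/-- Coordinatewise reflection `σ S = {(σ₁x₁, …, σₙxₙ) : x ∈ S}`. -/
def sigmaAct {n : ℕ} (σ : Fin n → Bool) (S : Set (EuclideanSpace ℝ (Fin n))) :
    Set (EuclideanSpace ℝ (Fin n)) :=
  (fun x => (WithLp.toLp 2 (fun i => sgn (σ i) * x i) : EuclideanSpace ℝ (Fin n))) '' S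

/-- Orthogonal projection onto the coordinate subspace `span {eᵢ : i ∈ I}`. -/
def coordProj {n : ℕ} (I : Finset (Fin n)) (x : EuclideanSpace ℝ (Fin n)) :
    EuclideanSpace ℝ (Fin n) :=
  (WithLp.toLp 2 (fun i => if i ∈ I then x i else 0) : EuclideanSpace ℝ (Fin n))

/-- The coordinate subspace `span {eᵢ : i ∈ I}`, as a set. -/
def coordSubspace {n : ℕ} (I : Finset (Fin n)) : Set (EuclideanSpace ℝ (Fin n)) :=
  {x | ∀ i ∉ I, x i = 0}

/-- A set `K ⊆ ℝ₊ⁿ` is anti-blocking if for every coordinate subspace `E` the orthogonal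
projection `P_E K` equals the section `K ∩ E`. -/
def IsAntiBlocking {n : ℕ} (K : Set (EuclideanSpace ℝ (Fin n))) : Prop :=
  K ⊆ nonnegOrthant n ∧ ∀ I : Finset (Fin n), coordProj I '' K = K ∩ coordSubspace I

/-- `K` is locally anti-blocking if `(σK) ∩ ℝ₊ⁿ` is anti-blocking for every sign vector `σ`. -/
def IsLocallyAntiBlocking {n : ℕ} (K : Set (EuclideanSpace ℝ (Fin n))) : Prop :=
  ∀ σ : Fin n → Bool, IsAntiBlocking (sigmaAct σ K ∩ nonnegOrthant n)

/-- The coordinate simplex `conv{0, e₁, …}` in the Euclidean space with coordinates `ι`. -/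
def coordSimplex (ι : Type*) [Fintype ι] [DecidableEq ι] : Set (EuclideanSpace ℝ ι) :=
  convexHull ℝ (insert 0 (Set.range fun i : ι => EuclideanSpace.single i (1 : ℝ)))

/-- Restriction to the coordinates in `I`, realizing the orthogonal projection onto
`span {eᵢ : i ∈ I}` as a map onto a `#I`-dimensional Euclidean space (so that volumes of
images compute lower-dimensional Lebesgue measures of coordinate projections). -/
def restrictCoords {n : ℕ} (I : Finset (Fin n)) (x : EuclideanSpace ℝ (Fin n)) :
    EuclideanSpace ℝ ↥I :=
  (WithLp.toLp 2 (fun i => x i) : EuclideanSpace ℝ ↥I)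

/-- `V A B` lists the mixed volumes `Vₙ(A[j], B[n-j])` of two convex bodies, characterized by
the Minkowski polynomial expansion. -/
def IsMixedVolFn (n : ℕ)
    (V : Set (EuclideanSpace ℝ (Fin n)) → Set (EuclideanSpace ℝ (Fin n)) → ℕ → ℝ) : Prop :=
  ∀ A B : Set (EuclideanSpace ℝ (Fin n)), Convex ℝ A → IsCompact A → A.Nonempty →
    Convex ℝ B → IsCompact B → B.Nonempty →
    ∀ l m : ℝ, 0 ≤ l → 0 ≤ m →
      (volume (l • A + m • B)).toReal =
        ∑ i ∈ Finset.range (n + 1), (n.choose i : ℝ) * l ^ i * m ^ (n - i) * V A B i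


open Polynomial in
lemma eq_of_forall_pos_sum_mul_pow_eq {N : ℕ} {c d : ℕ → ℝ}
    (h : ∀ l : ℝ, 0 < l →
      ∑ i ∈ Finset.range N, c i * l ^ i = ∑ i ∈ Finset.range N, d i * l ^ i)
    {j : ℕ} (hj : j < N) : c j = d j := by
  let p : ℝ[X] := ∑ i ∈ Finset.range N, C (c i) * X ^ i
  let q : ℝ[X] := ∑ i ∈ Finset.range N, C (d i) * X ^ i
  have hpq : p = q := eq_of_infinite_eval_eq p q <|
    (Set.Ioi_infinite 0).mono fun l hl => by simpa [p, q, eval_finsetSum] using h l hl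
  simpa [p, q, finsetSum_coeff, coeff_C_mul_X_pow, hj] using congr_arg (coeff · j) hpq

lemma exists_add_eq_of_mem_uIcc (y z : ℝ) :
    ∃ a ∈ Set.uIcc 0 y, ∃ b ∈ Set.uIcc 0 z,
      a + b = y + z ∧ a ∈ Set.uIcc 0 (y + z) ∧ b ∈ Set.uIcc 0 (y + z) := by
  simp only [Set.mem_uIcc]
  rcases le_total 0 y with hy | hy <;> rcases le_total 0 z with hz | hz <;>
    rcases le_total 0 (y + z) with hyz | hyz <;>
    first
    | exact ⟨y, by grind, z, by grind⟩
    | exact ⟨y + z, by grind, 0, by grind⟩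
    | exact ⟨0, by grind, y + z, by grind⟩

lemma sgn_mul_self (b : Bool) : sgn b * sgn b = 1 := by
  cases b <;> norm_num [sgn]

section Orthants

variable {n : ℕ}

local notation "ℝⁿ" => EuclideanSpace ℝ (Fin n)

def signFlip (σ : Fin n → Bool) (x : ℝⁿ) : ℝⁿ :=
  WithLp.toLp 2 fun i => sgn (σ i) * x i

@[simp]
lemma signFlip_apply (σ : Fin n → Bool) (x : ℝⁿ) (i : Fin n) :
    signFlip σ x i = sgn (σ i) * x i := rfl

@[simp]
lemma signFlip_signFlip (σ : Fin n → Bool) (x : ℝⁿ) : signFlip σ (signFlip σ x) = x := by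
  ext i
  simp [← mul_assoc, sgn_mul_self]

lemma signFlip_mem_sigmaAct {σ : Fin n → Bool} {S : Set ℝⁿ} {x : ℝⁿ} (hx : x ∈ S) :
    signFlip σ x ∈ sigmaAct σ S :=
  ⟨x, hx, rfl⟩

lemma signFlip_mem_of_mem_sigmaAct {σ : Fin n → Bool} {S : Set ℝⁿ} {x : ℝⁿ}
    (hx : x ∈ sigmaAct σ S) : signFlip σ x ∈ S := by
  obtain ⟨y, hy, rfl⟩ := hx
  change signFlip σ (signFlip σ y) ∈ S
  rwa [signFlip_signFlip]

lemma signFlip_mem_nonnegOrthant_iff {σ : Fin n → Bool} {x : ℝⁿ} :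
    signFlip σ x ∈ nonnegOrthant n ↔ x ∈ signedOrthant σ := Iff.rfl

lemma signFlip_coordProj_signFlip (σ : Fin n → Bool) (I : Finset (Fin n)) (x : ℝⁿ) :
    signFlip σ (coordProj I (signFlip σ x)) = coordProj I x := by
  ext i
  by_cases hi : i ∈ I <;> simp [coordProj, hi, ← mul_assoc, sgn_mul_self]

lemma exists_mem_signedOrthant (x : ℝⁿ) : ∃ σ, x ∈ signedOrthant σ := by
  refine ⟨fun i => decide (0 ≤ x i), fun i => ?_⟩
  by_cases h : 0 ≤ x i <;> simp [sgn, h]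
  linarith

lemma iUnion_signedOrthant : ⋃ σ : Fin n → Bool, signedOrthant σ = Set.univ :=
  Set.eq_univ_of_forall fun x => Set.mem_iUnion.mpr (exists_mem_signedOrthant x)

lemma signedOrthant_inter_subset {σ τ : Fin n → Bool} {i : Fin n} (h : σ i ≠ τ i) :
    signedOrthant σ ∩ signedOrthant τ ⊆ {x | x i = 0} := by
  rintro x ⟨hσ, hτ⟩
  have hσi := hσ i
  have hτi := hτ i
  cases hs : σ i <;> cases ht : τ i <;> simp_all [sgn] <;> linarith

lemma isClosed_signedOrthant (σ : Fin n → Bool) : IsClosed (signedOrthant σ) := by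
  simp only [signedOrthant, Set.ofPred_forall]
  exact isClosed_iInter fun i => isClosed_le continuous_const (by fun_prop)

lemma convex_signedOrthant (σ : Fin n → Bool) : Convex ℝ (signedOrthant σ) := by
  intro x hx y hy a b ha hb _ i
  have hi : sgn (σ i) * (a • x + b • y) i = a * (sgn (σ i) * x i) + b * (sgn (σ i) * y i) := by
    simp only [PiLp.add_apply, PiLp.smul_apply, smul_eq_mul]
    ring
  rw [hi]
  exact add_nonneg (mul_nonneg ha (hx i)) (mul_nonneg hb (hy i))

lemma signedOrthant_add_subset (σ : Fin n → Bool) :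
    signedOrthant σ + signedOrthant σ ⊆ signedOrthant σ := by
  rintro _ ⟨x, hx, y, hy, rfl⟩ i
  simpa [mul_add] using add_nonneg (hx i) (hy i)

lemma smul_signedOrthant {l : ℝ} (hl : 0 < l) (σ : Fin n → Bool) :
    l • signedOrthant σ = signedOrthant σ := by
  ext x
  rw [Set.mem_smul_set_iff_inv_smul_mem₀ hl.ne']
  refine forall_congr' fun i => ?_
  simp only [PiLp.smul_apply, smul_eq_mul, mul_left_comm _ l⁻¹]
  exact mul_nonneg_iff_of_pos_left (inv_pos.mpr hl)

lemma smul_inter_signedOrthant (K : Set ℝⁿ) {l : ℝ} (hl : 0 < l) (σ : Fin n → Bool) :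
    l • (K ∩ signedOrthant σ) = l • K ∩ signedOrthant σ := by
  rw [Set.smul_set_inter₀ hl.ne', smul_signedOrthant hl]

lemma mem_signedOrthant_of_forall_mem_uIcc {σ : Fin n → Bool} {x u : ℝⁿ}
    (hx : x ∈ signedOrthant σ) (hu : ∀ i, u i ∈ Set.uIcc 0 (x i)) : u ∈ signedOrthant σ := by
  intro i
  have h := Set.mem_image_of_mem (sgn (σ i) * ·) (hu i)
  rw [Set.image_const_mul_uIcc, mul_zero, Set.uIcc_of_le (hx i)] at h
  exact h.1

lemma volume_coord_eq_zero (i : Fin n) : volume {x : ℝⁿ | x i = 0} = 0 := by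
  let coord : ℝⁿ →ₗ[ℝ] ℝ := (EuclideanSpace.proj i : ℝⁿ →L[ℝ] ℝ)
  refine Measure.addHaar_submodule _ (LinearMap.ker coord) fun h => ?_
  have : EuclideanSpace.single i (1 : ℝ) ∈ LinearMap.ker coord := h ▸ Submodule.mem_top
  simp [coord] at this

lemma volume_eq_sum_inter_signedOrthant {S : Set ℝⁿ} (hS : NullMeasurableSet S) :
    volume S = ∑ σ : Fin n → Bool, volume (S ∩ signedOrthant σ) := by
  have hdisj : Pairwise fun σ τ : Fin n → Bool =>
      AEDisjoint volume (S ∩ signedOrthant σ) (S ∩ signedOrthant τ) := by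
    intro σ τ hστ
    obtain ⟨i, hi⟩ := Function.ne_iff.mp hστ
    refine measure_mono_null (fun x hx => ?_) (volume_coord_eq_zero i)
    exact signedOrthant_inter_subset hi ⟨hx.1.2, hx.2.2⟩
  calc volume S = volume (⋃ σ, S ∩ signedOrthant σ) := by
        rw [← Set.inter_iUnion, iUnion_signedOrthant, Set.inter_univ]
    _ = ∑' σ, volume (S ∩ signedOrthant σ) :=
        measure_iUnion₀ hdisj fun σ => hS.inter (isClosed_signedOrthant σ).nullMeasurableSet
    _ = ∑ σ, volume (S ∩ signedOrthant σ) := tsum_fintype _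

def IsOrthantDownClosed (K : Set ℝⁿ) : Prop :=
  ∀ x ∈ K, ∀ u : ℝⁿ, (∀ i, u i ∈ Set.uIcc 0 (x i)) → u ∈ K

lemma IsLocallyAntiBlocking.coordProj_mem {K : Set ℝⁿ} (hK : IsLocallyAntiBlocking K)
    {x : ℝⁿ} (hx : x ∈ K) (I : Finset (Fin n)) : coordProj I x ∈ K := by
  obtain ⟨σ, hσ⟩ := exists_mem_signedOrthant x
  have hσx : signFlip σ x ∈ sigmaAct σ K ∩ nonnegOrthant n :=
    ⟨signFlip_mem_sigmaAct hx, signFlip_mem_nonnegOrthant_iff.mpr hσ⟩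
  have hproj : coordProj I (signFlip σ x) ∈ sigmaAct σ K ∩ nonnegOrthant n :=
    ((hK σ).2 I ▸ Set.mem_image_of_mem _ hσx).1
  rw [← signFlip_coordProj_signFlip σ]
  exact signFlip_mem_of_mem_sigmaAct hproj.1

lemma IsLocallyAntiBlocking.zero_mem {K : Set ℝⁿ} (hK : IsLocallyAntiBlocking K)
    (hne : K.Nonempty) : (0 : ℝⁿ) ∈ K := by
  obtain ⟨x, hx⟩ := hne
  convert hK.coordProj_mem hx ∅
  ext i
  simp [coordProj]

lemma forall_mem_uIcc_subset_convexHull_coordProj (x : ℝⁿ) :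
    {u : ℝⁿ | ∀ i, u i ∈ Set.uIcc 0 (x i)} ⊆
      convexHull ℝ (Set.range fun I : Finset (Fin n) => coordProj I x) := by
  intro u hu
  let e : (Fin n → ℝ) →ₗ[ℝ] ℝⁿ := (WithLp.linearEquiv 2 ℝ (Fin n → ℝ)).symm.toLinearMap
  have hbox : u.ofLp ∈ convexHull ℝ (Set.univ.pi fun i => ({0, x i} : Set ℝ)) := by
    rw [convexHull_pi]
    intro i _
    dsimp only
    rw [convexHull_pair, segment_eq_uIcc]
    exact hu i
  have hu' := Set.mem_image_of_mem e hbox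
  rw [e.image_convexHull] at hu'
  refine convexHull_mono ?_ hu'
  rintro _ ⟨v, hv, rfl⟩
  refine ⟨Finset.univ.filter fun i => v i = x i, ?_⟩
  ext i
  rcases hv i trivial with h | h <;> by_cases hx : x i = 0 <;> simp_all [coordProj, e]

lemma IsLocallyAntiBlocking.isOrthantDownClosed {K : Set ℝⁿ} (hK : IsLocallyAntiBlocking K)
    (hc : Convex ℝ K) : IsOrthantDownClosed K := fun x hx _ hu =>
  hc.convexHull_subset_iff.mpr (Set.range_subset_iff.mpr (hK.coordProj_mem hx))
    (forall_mem_uIcc_subset_convexHull_coordProj x hu)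

lemma IsOrthantDownClosed.smul {K : Set ℝⁿ} (hK : IsOrthantDownClosed K) (l : ℝ) :
    IsOrthantDownClosed (l • K) := by
  rintro _ ⟨x, hx, rfl⟩ u hu
  have hu' : ∀ i, u i ∈ (l * ·) '' Set.uIcc 0 (x i) := fun i => by
    rw [Set.image_const_mul_uIcc, mul_zero]
    exact hu i
  choose w hw hwu using hu'
  exact ⟨WithLp.toLp 2 w, hK x hx _ hw, by ext i; exact hwu i⟩

lemma IsOrthantDownClosed.add_inter_signedOrthant {A B : Set ℝⁿ} (hA : IsOrthantDownClosed A)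
    (hB : IsOrthantDownClosed B) (σ : Fin n → Bool) :
    (A + B) ∩ signedOrthant σ = A ∩ signedOrthant σ + B ∩ signedOrthant σ := by
  refine Set.Subset.antisymm ?_ fun x hx =>
    ⟨Set.add_subset_add Set.inter_subset_left Set.inter_subset_left hx,
      signedOrthant_add_subset σ
        (Set.add_subset_add Set.inter_subset_right Set.inter_subset_right hx)⟩
  rintro _ ⟨⟨y, hy, z, hz, rfl⟩, hyz⟩
  choose a ha b hb hab hay hbz using fun i => exists_add_eq_of_mem_uIcc (y i) (z i)
  refine ⟨WithLp.toLp 2 a, ⟨hA y hy _ ha, mem_signedOrthant_of_forall_mem_uIcc hyz hay⟩,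
    WithLp.toLp 2 b, ⟨hB z hz _ hb, mem_signedOrthant_of_forall_mem_uIcc hyz hbz⟩, ?_⟩
  ext i
  exact hab i

lemma volume_smul_add_eq_sum_signedOrthant {K K' : Set ℝⁿ} (hK : IsLocallyAntiBlocking K)
    (hKconv : Convex ℝ K) (hKcomp : IsCompact K) (hK' : IsLocallyAntiBlocking K')
    (hK'conv : Convex ℝ K') (hK'comp : IsCompact K') {l : ℝ} (hl : 0 < l) :
    volume (l • K + K') = ∑ σ : Fin n → Bool,
      volume (l • (K ∩ signedOrthant σ) + K' ∩ signedOrthant σ) := by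
  rw [volume_eq_sum_inter_signedOrthant
    ((hKcomp.smul l).add hK'comp).isClosed.measurableSet.nullMeasurableSet]
  refine Finset.sum_congr rfl fun σ _ => ?_
  rw [((hK.isOrthantDownClosed hKconv).smul l).add_inter_signedOrthant
    (hK'.isOrthantDownClosed hK'conv), smul_inter_signedOrthant K hl]

def ConvexBody.interSignedOrthant (K : ConvexBody ℝⁿ) (hK : (0 : ℝⁿ) ∈ K)
    (σ : Fin n → Bool) : ConvexBody ℝⁿ where
  carrier := K ∩ signedOrthant σ
  convex' := K.convex.inter (convex_signedOrthant σ)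
  isCompact' := K.isCompact.inter_right (isClosed_signedOrthant σ)
  nonempty' := ⟨0, hK, fun i => by simp⟩

lemma IsMixedVolFn.volume_smul_add {V : Set ℝⁿ → Set ℝⁿ → ℕ → ℝ} (hV : IsMixedVolFn n V)
    (A B : ConvexBody ℝⁿ) {l : ℝ} (hl : 0 ≤ l) :
    (volume (l • (A : Set ℝⁿ) + (B : Set ℝⁿ))).toReal =
      ∑ i ∈ Finset.range (n + 1), (n.choose i * V A B i) * l ^ i := by
  simpa [mul_right_comm] using
    hV A B A.convex A.isCompact A.nonempty B.convex B.isCompact B.nonempty l 1 hl zero_le_one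

lemma IsMixedVolFn.apply_eq_sum {V : Set ℝⁿ → Set ℝⁿ → ℕ → ℝ} (hV : IsMixedVolFn n V)
    {ι : Type*} [Fintype ι] (A B : ConvexBody ℝⁿ) (C D : ι → ConvexBody ℝⁿ)
    (hvol : ∀ l : ℝ, 0 < l → volume (l • (A : Set ℝⁿ) + (B : Set ℝⁿ)) =
      ∑ k, volume (l • (C k : Set ℝⁿ) + (D k : Set ℝⁿ)))
    {j : ℕ} (hj : j ≤ n) : V A B j = ∑ k, V (C k) (D k) j := by
  have hcoeff := eq_of_forall_pos_sum_mul_pow_eq (c := fun i => n.choose i * V A B i)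
    (d := fun i => n.choose i * ∑ k, V (C k) (D k) i) (fun l hl => ?_) (Nat.lt_succ_of_le hj)
  · exact mul_left_cancel₀ (Nat.cast_ne_zero.mpr (Nat.choose_pos hj).ne') hcoeff
  have hfin : ∀ k ∈ Finset.univ, volume (l • (C k : Set ℝⁿ) + (D k : Set ℝⁿ)) ≠ ⊤ := fun k _ =>
    (((C k).isCompact.smul l).add (D k).isCompact).measure_lt_top.ne
  rw [← hV.volume_smul_add A B hl.le, hvol l hl, ENNReal.toReal_sum hfin]
  simp_rw [hV.volume_smul_add _ _ hl.le, Finset.mul_sum, Finset.sum_mul]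
  exact Finset.sum_comm

end Orthants

/-- For locally anti-blocking bodies `K, K' ⊆ ℝⁿ` and `0 ≤ j ≤ n`,
`Vₙ(K[j], K'[n-j]) = ∑_{σ ∈ {-1,1}ⁿ} Vₙ(K_σ[j], K'_σ[n-j])` where `K_σ = K ∩ σℝ₊ⁿ`. -/
theorem mixed_volume_locally_antiblocking_orthant_decomposition
    (n : ℕ) (K K' : Set (EuclideanSpace ℝ (Fin n)))
    (hKconv : Convex ℝ K) (hKcomp : IsCompact K) (hKne : K.Nonempty)
    (hKlab : IsLocallyAntiBlocking K)
    (hK'conv : Convex ℝ K') (hK'comp : IsCompact K') (hK'ne : K'.Nonempty)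
    (hK'lab : IsLocallyAntiBlocking K')
    (j : ℕ) (hj : j ≤ n)
    (V : Set (EuclideanSpace ℝ (Fin n)) → Set (EuclideanSpace ℝ (Fin n)) → ℕ → ℝ)
    (hV : IsMixedVolFn n V) :
    V K K' j = ∑ σ : Fin n → Bool, V (K ∩ signedOrthant σ) (K' ∩ signedOrthant σ) j := by
  let A : ConvexBody (EuclideanSpace ℝ (Fin n)) := ⟨K, hKconv, hKcomp, hKne⟩
  let A' : ConvexBody (EuclideanSpace ℝ (Fin n)) := ⟨K', hK'conv, hK'comp, hK'ne⟩
  exact hV.apply_eq_sum A A' (A.interSignedOrthant (hKlab.zero_mem hKne))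
    (A'.interSignedOrthant (hK'lab.zero_mem hK'ne)) (fun l hl =>
      volume_smul_add_eq_sum_signedOrthant hKlab hKconv hKcomp hK'lab hK'conv hK'comp hl) hj
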